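/- For α ∈ ℂ with α ≠ ±2, the degree 6 hypersurface U_α in ℙ⁴ defined by w⁴t² − t⁶/3 + w⁴x² + x⁶/3 + y⁶ + α y³z³ + z⁶ = 0 has singular locus consisting of exactly the single point [0:0:0:0:1]. -/

import Mathlib

/-!
The partials in `y, z` involve only the binary sextic `y⁶ + α y³z³ + z⁶`; they force
`y = z = 0` because, away from `y z = 0`, they form a linear system in `(y³, z³)` of
determinant `4 - α²`. What remains is `w⁴(t² + x²) + (x⁶ - t⁶)/3`: the `w`-partial gives
`w = 0`, when the `t`- and `x`-partials kill `t` and `x`, or `x² = -t²`, when the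
equation itself reduces to `t⁶ = 0`.
-/

section

variable {K : Type*} [Field K] [CharZero K]

theorem eq_zero_and_eq_zero_of_binary_sextic_grad {α y z : K} (h2 : α ≠ 2) (hm2 : α ≠ -2)
    (hy : 6 * y ^ 5 + 3 * α * y ^ 2 * z ^ 3 = 0) (hz : 3 * α * y ^ 3 * z ^ 2 + 6 * z ^ 5 = 0) :
    y = 0 ∧ z = 0 := by
  have hy' : y ^ 2 * (2 * y ^ 3 + α * z ^ 3) = 0 :=
    (mul_eq_zero.mp (by linear_combination hy : (3 : K) * _ = 0)).resolve_left three_ne_zero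
  have hz' : z ^ 2 * (α * y ^ 3 + 2 * z ^ 3) = 0 :=
    (mul_eq_zero.mp (by linear_combination hz : (3 : K) * _ = 0)).resolve_left three_ne_zero
  rcases mul_eq_zero.mp hz' with hz2 | hlin_z
  · obtain rfl : z = 0 := pow_eq_zero_iff two_ne_zero |>.mp hz2
    have : 2 * y ^ 5 = 0 := by linear_combination hy'
    exact ⟨pow_eq_zero_iff (by norm_num) |>.mp ((mul_eq_zero.mp this).resolve_left two_ne_zero),
      rfl⟩
  rcases mul_eq_zero.mp hy' with hy2 | hlin_y
  · obtain rfl : y = 0 := pow_eq_zero_iff two_ne_zero |>.mp hy2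
    have : 2 * z ^ 3 = 0 := by linear_combination hlin_z
    exact ⟨rfl,
      pow_eq_zero_iff (by norm_num) |>.mp ((mul_eq_zero.mp this).resolve_left two_ne_zero)⟩
  have hdet : (α - 2) * (α + 2) ≠ 0 :=
    mul_ne_zero (sub_ne_zero.mpr h2) (fun h ↦ hm2 (eq_neg_of_add_eq_zero_left h))
  have hz3 : z ^ 3 = 0 :=
    (mul_eq_zero.mp (by linear_combination α * hlin_y - 2 * hlin_z :
      (α - 2) * (α + 2) * z ^ 3 = 0)).resolve_left hdet
  have hy3 : y ^ 3 = 0 :=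
    (mul_eq_zero.mp (by linear_combination α * hlin_z - 2 * hlin_y :
      (α - 2) * (α + 2) * y ^ 3 = 0)).resolve_left hdet
  exact ⟨pow_eq_zero_iff (by norm_num) |>.mp hy3, pow_eq_zero_iff (by norm_num) |>.mp hz3⟩

theorem eq_zero_and_eq_zero_of_singular_txw {t x w : K}
    (hF : w ^ 4 * t ^ 2 - t ^ 6 / 3 + w ^ 4 * x ^ 2 + x ^ 6 / 3 = 0)
    (ht : 2 * w ^ 4 * t - 2 * t ^ 5 = 0) (hx : 2 * w ^ 4 * x + 2 * x ^ 5 = 0)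
    (hw : 4 * w ^ 3 * (t ^ 2 + x ^ 2) = 0) :
    t = 0 ∧ x = 0 := by
  rcases mul_eq_zero.mp hw with hw3 | hsum
  · obtain rfl : w = 0 := pow_eq_zero_iff (by norm_num) |>.mp
      ((mul_eq_zero.mp hw3).resolve_left (by norm_num))
    have ht5 : t ^ 5 = 0 := by linear_combination -ht / 2
    have hx5 : x ^ 5 = 0 := by linear_combination hx / 2
    exact ⟨pow_eq_zero_iff (by norm_num) |>.mp ht5, pow_eq_zero_iff (by norm_num) |>.mp hx5⟩
  · have ht6 : t ^ 6 = 0 := by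
      linear_combination -3 / 2 * hF + (3 / 2 * w ^ 4 + (t ^ 4 - t ^ 2 * x ^ 2 + x ^ 4) / 2) * hsum
    obtain rfl : t = 0 := pow_eq_zero_iff (by norm_num) |>.mp ht6
    have hx2 : x ^ 2 = 0 := by linear_combination hsum
    exact ⟨rfl, pow_eq_zero_iff two_ne_zero |>.mp hx2⟩

end

theorem stmt_5_general (α : ℂ) (hα : α ≠ 2 ∧ α ≠ -2) (t x y z w : ℂ) :
    (w ^ 4 * t ^ 2 - t ^ 6 / 3 + w ^ 4 * x ^ 2 + x ^ 6 / 3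
        + y ^ 6 + α * y ^ 3 * z ^ 3 + z ^ 6 = 0 ∧           -- F = 0
      2 * w ^ 4 * t - 2 * t ^ 5 = 0 ∧                        -- ∂F/∂t = 0
      2 * w ^ 4 * x + 2 * x ^ 5 = 0 ∧                        -- ∂F/∂x = 0
      6 * y ^ 5 + 3 * α * y ^ 2 * z ^ 3 = 0 ∧                -- ∂F/∂y = 0
      3 * α * y ^ 3 * z ^ 2 + 6 * z ^ 5 = 0 ∧                -- ∂F/∂z = 0
      4 * w ^ 3 * (t ^ 2 + x ^ 2) = 0)                       -- ∂F/∂w = 0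
    ↔ (t = 0 ∧ x = 0 ∧ y = 0 ∧ z = 0) := by
  constructor
  · rintro ⟨hF, ht, hx, hy, hz, hw⟩
    obtain ⟨rfl, rfl⟩ := eq_zero_and_eq_zero_of_binary_sextic_grad hα.1 hα.2 hy hz
    obtain ⟨rfl, rfl⟩ :=
      eq_zero_and_eq_zero_of_singular_txw (by linear_combination hF) ht hx hw
    exact ⟨rfl, rfl, rfl, rfl⟩
  · rintro ⟨rfl, rfl, rfl, rfl⟩
    norm_num

theorem stmt_5 (α : ℂ) (hα : α ≠ 2 ∧ α ≠ -2) (t x y z w : ℂ)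
    (hp : ¬(t = 0 ∧ x = 0 ∧ y = 0 ∧ z = 0 ∧ w = 0)) :
    (w ^ 4 * t ^ 2 - t ^ 6 / 3 + w ^ 4 * x ^ 2 + x ^ 6 / 3
        + y ^ 6 + α * y ^ 3 * z ^ 3 + z ^ 6 = 0 ∧           -- F = 0
      2 * w ^ 4 * t - 2 * t ^ 5 = 0 ∧                        -- ∂F/∂t = 0
      2 * w ^ 4 * x + 2 * x ^ 5 = 0 ∧                        -- ∂F/∂x = 0
      6 * y ^ 5 + 3 * α * y ^ 2 * z ^ 3 = 0 ∧                -- ∂F/∂y = 0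
      3 * α * y ^ 3 * z ^ 2 + 6 * z ^ 5 = 0 ∧                -- ∂F/∂z = 0
      4 * w ^ 3 * (t ^ 2 + x ^ 2) = 0)                       -- ∂F/∂w = 0
    ↔ (t = 0 ∧ x = 0 ∧ y = 0 ∧ z = 0) :=
  stmt_5_general α hα t x y z w
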